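/- Let q ≥ 2 and consider the directed graph C on vertex set {A_j : 0 ≤ j ≤ q} ∪ {B_j : 0 ≤ j ≤ q−1} ∪ {C_j : 1 ≤ j ≤ q} ∪ {D_j : 0 ≤ j ≤ q+1}, with edges: A_j → A_{j−1}, A_j → B_{j−1} (1 ≤ j ≤ q); B_j → A_{j−1}, B_j → B_{j−1} (1 ≤ j ≤ q−1); C_j → B_{j−1}, C_j → C_{j−1}, C_j → D_{j−1} (2 ≤ j ≤ q); D_j → A_{j−1}, D_j → C_{j−1}, D_j → D_{j−1} (2 ≤ j ≤ q+1); C_1 → B_0, C_1 → D_0; D_1 → A_0, D_1 → D_0. Then the involution R defined by R(A_j) = D_{q−j} (0 ≤ j ≤ q) and R(B_j) = C_{q−j} (0 ≤ j ≤ q−1) is an anti-automorphism of C restricted to all vertices except D_{q+1}: for vertices v, w ≠ D_{q+1}, there is an edge v → w if and only if there is an edge R(w) → R(v). -/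
import Mathlib


/-- Vertices of the connection graph `C_{1q}^κ`: equilibria tagged `A, B, C, D`
with subscripts. -/
inductive ConnVertex where
  | A : ℕ → ConnVertex
  | B : ℕ → ConnVertex
  | C : ℕ → ConnVertex
  | D : ℕ → ConnVertex
deriving DecidableEq

open ConnVertex

/-- The vertex set of `C_{1q}^κ`: `A_j (0 ≤ j ≤ q)`, `B_j (0 ≤ j ≤ q-1)`,
`C_j (1 ≤ j ≤ q)`, `D_j (0 ≤ j ≤ q+1)`. -/
def connVertexMem (q : ℕ) : ConnVertex → Prop
  | A j => j ≤ q
  | B j => j ≤ q - 1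
  | C j => 1 ≤ j ∧ j ≤ q
  | D j => j ≤ q + 1

/-- The heteroclinic edges of the connection graph `C = C_{1q}^κ`. -/
def connEdge (q : ℕ) (v w : ConnVertex) : Prop :=
  (∃ j, 1 ≤ j ∧ j ≤ q ∧ v = A j ∧ (w = A (j - 1) ∨ w = B (j - 1))) ∨
  (∃ j, 1 ≤ j ∧ j ≤ q - 1 ∧ v = B j ∧ (w = A (j - 1) ∨ w = B (j - 1))) ∨
  (∃ j, 2 ≤ j ∧ j ≤ q ∧ v = C j ∧
    (w = B (j - 1) ∨ w = C (j - 1) ∨ w = D (j - 1))) ∨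
  (∃ j, 2 ≤ j ∧ j ≤ q + 1 ∧ v = D j ∧
    (w = A (j - 1) ∨ w = C (j - 1) ∨ w = D (j - 1))) ∨
  (v = C 1 ∧ (w = B 0 ∨ w = D 0)) ∨
  (v = D 1 ∧ (w = A 0 ∨ w = D 0))

/-- The reversor `R`: `A_j ↔ D_{q-j}`, `B_j ↔ C_{q-j}`. -/
def connReversor (q : ℕ) : ConnVertex → ConnVertex
  | A j => D (q - j)
  | B j => C (q - j)
  | C j => B (q - j)
  | D j => A (q - j)

/-- Arithmetic characterization of the edge relation. -/
def edgeFun (q : ℕ) : ConnVertex → ConnVertex → Prop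
  | A i, A k => 1 ≤ i ∧ i ≤ q ∧ k = i - 1
  | A i, B k => 1 ≤ i ∧ i ≤ q ∧ k = i - 1
  | B i, A k => 1 ≤ i ∧ i ≤ q - 1 ∧ k = i - 1
  | B i, B k => 1 ≤ i ∧ i ≤ q - 1 ∧ k = i - 1
  | C i, B k => 1 ≤ i ∧ i ≤ q ∧ k = i - 1
  | C i, C k => 2 ≤ i ∧ i ≤ q ∧ k = i - 1
  | C i, D k => 1 ≤ i ∧ i ≤ q ∧ k = i - 1
  | D i, A k => 1 ≤ i ∧ i ≤ q + 1 ∧ k = i - 1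
  | D i, C k => 2 ≤ i ∧ i ≤ q + 1 ∧ k = i - 1
  | D i, D k => 1 ≤ i ∧ i ≤ q + 1 ∧ k = i - 1
  | _, _ => False

lemma connEdge_iff (q : ℕ) (hq : 2 ≤ q) (v w : ConnVertex) : connEdge q v w ↔ edgeFun q v w := by
  constructor
  · rintro (⟨j,h1,h2,rfl,rfl|rfl⟩|⟨j,h1,h2,rfl,rfl|rfl⟩|⟨j,h1,h2,rfl,rfl|rfl|rfl⟩|
      ⟨j,h1,h2,rfl,rfl|rfl|rfl⟩|⟨rfl,rfl|rfl⟩|⟨rfl,rfl|rfl⟩) <;> simp [edgeFun] <;> omega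
  · intro h
    cases v <;> cases w <;> simp only [edgeFun] at h <;> try exact h.elim
    all_goals obtain ⟨h1, h2, rfl⟩ := h
    · exact Or.inl ⟨_, h1, h2, rfl, Or.inl rfl⟩
    · exact Or.inl ⟨_, h1, h2, rfl, Or.inr rfl⟩
    · exact Or.inr (Or.inl ⟨_, h1, h2, rfl, Or.inl rfl⟩)
    · exact Or.inr (Or.inl ⟨_, h1, h2, rfl, Or.inr rfl⟩)
    · -- C i → B (i-1)
      rename_i i
      rcases Nat.lt_or_ge i 2 with hi | hi
      · have : i = 1 := by omega
        subst this
        exact Or.inr (Or.inr (Or.inr (Or.inr (Or.inl ⟨rfl, Or.inl rfl⟩))))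
      · exact Or.inr (Or.inr (Or.inl ⟨_, hi, h2, rfl, Or.inl rfl⟩))
    · exact Or.inr (Or.inr (Or.inl ⟨_, h1, h2, rfl, Or.inr (Or.inl rfl)⟩))
    · rename_i i
      rcases Nat.lt_or_ge i 2 with hi | hi
      · have : i = 1 := by omega
        subst this
        exact Or.inr (Or.inr (Or.inr (Or.inr (Or.inl ⟨rfl, Or.inr rfl⟩))))
      · exact Or.inr (Or.inr (Or.inl ⟨_, hi, h2, rfl, Or.inr (Or.inr rfl)⟩))
    · rename_i i
      rcases Nat.lt_or_ge i 2 with hi | hi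
      · have : i = 1 := by omega
        subst this
        exact Or.inr (Or.inr (Or.inr (Or.inr (Or.inr ⟨rfl, Or.inl rfl⟩))))
      · exact Or.inr (Or.inr (Or.inr (Or.inl ⟨_, hi, h2, rfl, Or.inl rfl⟩)))
    · exact Or.inr (Or.inr (Or.inr (Or.inl ⟨_, h1, h2, rfl, Or.inr (Or.inl rfl)⟩)))
    · rename_i i
      rcases Nat.lt_or_ge i 2 with hi | hi
      · have : i = 1 := by omega
        subst this
        exact Or.inr (Or.inr (Or.inr (Or.inr (Or.inr ⟨rfl, Or.inr rfl⟩))))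
      · exact Or.inr (Or.inr (Or.inr (Or.inl ⟨_, hi, h2, rfl, Or.inr (Or.inr rfl)⟩)))

/-- For `q ≥ 2`, the reversor `R` is an involution on the vertices and an
anti-automorphism of the connection graph restricted to all vertices except
`D_{q+1}`: for vertices `v, w ≠ D_{q+1}`, there is an edge `v → w` iff there is an
edge `R w → R v`. -/
theorem connection_graph_reversibility (q : ℕ) (hq : 2 ≤ q) :
    (∀ v, connVertexMem q v → v ≠ D (q + 1) →
      connReversor q (connReversor q v) = v) ∧
    (∀ v w, connVertexMem q v → connVertexMem q w →
      v ≠ D (q + 1) → w ≠ D (q + 1) →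
      (connEdge q v w ↔ connEdge q (connReversor q w) (connReversor q v))) := by
  constructor
  · intro v hv hne
    cases v <;> simp [connReversor, connVertexMem] at * <;> omega
  · intro v w hv hw hv' hw'
    rw [connEdge_iff q hq, connEdge_iff q hq]
    cases v <;> cases w <;>
      simp [connReversor, connVertexMem, edgeFun, ConnVertex.D.injEq] at * <;> omega
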